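/- The flat tetrahedrons cover the hyperplane: H = {v ∈ ℝ⁴ : v₁+v₂+v₃+v₄ = 0} equals the union, over all a ∈ ℤ⁴ and all pairwise distinct i,j,k ∈ {1,2,3,4}, of the projected tetrahedrons π(T(a;i,j,k)). -/

import Mathlib

noncomputable section

/-- Ambient space ℝ⁴. -/
abbrev E4 := EuclideanSpace ℝ (Fin 4)

/-- Standard basis vector eᵢ of ℝ⁴. -/
def ee4 (i : Fin 4) : E4 := EuclideanSpace.single i 1

/-- 𝟙 = e₁ + e₂ + e₃ + e₄. -/
def ones4 : E4 := ∑ i, ee4 i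

/-- Orthogonal projection π onto the hyperplane H = {v ∈ ℝ⁴ : v₁+v₂+v₃+v₄ = 0},
    given by π(v) = v − ((v₁+v₂+v₃+v₄)/4)·𝟙. -/
def proj4 (v : E4) : E4 := v - ((∑ i, v i) / 4) • ones4

/-- A lattice point of ℤ⁴ viewed in ℝ⁴. -/
def toE4 (a : Fin 4 → ℤ) : E4 := WithLp.toLp 2 (fun n => (a n : ℝ))

/-- Slant tetrahedron T(a;i,j,k) = conv{a, a+eᵢ, a+eᵢ+eⱼ, a+eᵢ+eⱼ+e_k}. -/
def slant4 (a : Fin 4 → ℤ) (i j k : Fin 4) : Set E4 :=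
  convexHull ℝ {toE4 a, toE4 a + ee4 i, toE4 a + ee4 i + ee4 j,
    toE4 a + ee4 i + ee4 j + ee4 k}

/-- Flat tetrahedron: the image π(T(a;i,j,k)). -/
def flat4 (a : Fin 4 → ℤ) (i j k : Fin 4) : Set E4 := proj4 '' slant4 a i j k

/-! The projection `π` maps `ℝ⁴` onto `H`, fixes `H` and kills `𝟙`. Write `v ∈ H` as
`a + ∑ fₙ eₙ` with `a = ⌊v⌋` and `f = fract v ∈ [0,1)⁴`, and sort `f` increasingly along a
permutation `σ`. Subtracting `f (σ 0) • 𝟙`, which `π` does not see, leaves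
`a + c₁ e_{σ 3} + c₂ e_{σ 2} + c₃ e_{σ 1}` with `1 ≥ c₁ ≥ c₂ ≥ c₃ ≥ 0`, a point of the slant
tetrahedron `T(a; σ 3, σ 2, σ 1)` (this is Kuhn's triangulation of the unit cube). -/

theorem ee4_apply (i n : Fin 4) : ee4 i n = if n = i then 1 else 0 :=
  PiLp.single_apply 2 ℝ i 1 n

theorem ones4_apply (n : Fin 4) : ones4 n = 1 := by
  simp [ones4, ee4_apply]

theorem sum_smul_ee4_apply (f : Fin 4 → ℝ) (n : Fin 4) : (∑ m, f m • ee4 m) n = f n := by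
  simp [ee4_apply]

theorem eq_toE4_floor_add_sum_fract_smul_ee4 (v : E4) :
    v = toE4 (fun n => ⌊v n⌋) + ∑ n, Int.fract (v n) • ee4 n := by
  ext n
  simp only [PiLp.add_apply, sum_smul_ee4_apply, toE4]
  exact (Int.floor_add_fract (v n)).symm

theorem sum_proj4_apply (v : E4) : ∑ n, proj4 v n = 0 := by
  simp only [proj4, PiLp.sub_apply, PiLp.smul_apply, ones4_apply, smul_eq_mul, mul_one,
    Finset.sum_sub_distrib, Finset.sum_const, Finset.card_univ, Fintype.card_fin, nsmul_eq_mul]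
  ring

theorem proj4_of_sum_eq_zero {v : E4} (hv : ∑ n, v n = 0) : proj4 v = v := by
  simp [proj4, hv]

theorem proj4_add_smul_ones4 (v : E4) (c : ℝ) : proj4 (v + c • ones4) = proj4 v := by
  ext n
  simp only [proj4, PiLp.add_apply, PiLp.sub_apply, PiLp.smul_apply, ones4_apply, smul_eq_mul,
    mul_one, Finset.sum_add_distrib, Finset.sum_const, Finset.card_univ, Fintype.card_fin,
    nsmul_eq_mul]
  ring

theorem add_smul_ee4_mem_slant4 (a : Fin 4 → ℤ) (i j k : Fin 4) {c₁ c₂ c₃ : ℝ}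
    (h₁ : c₁ ≤ 1) (h₁₂ : c₂ ≤ c₁) (h₂₃ : c₃ ≤ c₂) (h₃ : 0 ≤ c₃) :
    toE4 a + c₁ • ee4 i + c₂ • ee4 j + c₃ • ee4 k ∈ slant4 a i j k := by
  set p := ![toE4 a, toE4 a + ee4 i, toE4 a + ee4 i + ee4 j, toE4 a + ee4 i + ee4 j + ee4 k]
  set w := ![1 - c₁, c₁ - c₂, c₂ - c₃, c₃]
  have hw : ∀ m ∈ Finset.univ, 0 ≤ w m := by
    intro m _
    fin_cases m <;> simp [w] <;> linarith
  have hp : ∀ m ∈ Finset.univ, p m ∈ slant4 a i j k := by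
    intro m _
    fin_cases m <;> exact subset_convexHull ℝ _ (by simp [p])
  have hcomb : ∑ m, w m • p m = toE4 a + c₁ • ee4 i + c₂ • ee4 j + c₃ • ee4 k := by
    simp only [Fin.sum_univ_four, w, p, Matrix.cons_val_zero, Matrix.cons_val_one, Matrix.cons_val]
    module
  rw [← hcomb]
  exact (convex_convexHull ℝ _).sum_mem hw (by simp [Fin.sum_univ_four, w]) hp

theorem exists_proj4_add_sum_smul_ee4_mem_flat4 (a : Fin 4 → ℤ) {f : Fin 4 → ℝ}
    (hf₀ : ∀ n, 0 ≤ f n) (hf₁ : ∀ n, f n ≤ 1) :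
    ∃ i j k, i ≠ j ∧ i ≠ k ∧ j ≠ k ∧ proj4 (toE4 a + ∑ n, f n • ee4 n) ∈ flat4 a i j k := by
  set σ := Tuple.sort f
  have hle : ∀ m₁ m₂ : Fin 4, m₁ ≤ m₂ → f (σ m₁) ≤ f (σ m₂) :=
    fun _ _ h => Tuple.monotone_sort f h
  have hsum : ∀ g : Fin 4 → E4, ∑ n, g n = g (σ 0) + g (σ 1) + g (σ 2) + g (σ 3) := fun g => by
    rw [← Equiv.sum_comp σ, Fin.sum_univ_four]
  have hshift : toE4 a + ∑ n, f n • ee4 n =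
      toE4 a + (f (σ 3) - f (σ 0)) • ee4 (σ 3) + (f (σ 2) - f (σ 0)) • ee4 (σ 2)
        + (f (σ 1) - f (σ 0)) • ee4 (σ 1) + f (σ 0) • ones4 := by
    rw [ones4, hsum, hsum]
    module
  refine ⟨σ 3, σ 2, σ 1, σ.injective.ne (by decide), σ.injective.ne (by decide),
    σ.injective.ne (by decide), _,
    add_smul_ee4_mem_slant4 a _ _ _ ?_ ?_ ?_ ?_, by rw [hshift, proj4_add_smul_ones4]⟩
  · linarith [hf₀ (σ 0), hf₁ (σ 3)]
  · linarith [hle 2 3 (by decide)]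
  · linarith [hle 1 2 (by decide)]
  · linarith [hle 0 1 (by decide)]

/-- the flat tetrahedrons cover the hyperplane H. -/
theorem stmt11 :
    {v : E4 | ∑ n, v n = 0} =
      ⋃ (a : Fin 4 → ℤ) (i : Fin 4) (j : Fin 4) (k : Fin 4)
        (_ : i ≠ j) (_ : i ≠ k) (_ : j ≠ k), flat4 a i j k := by
  ext v
  simp only [Set.mem_ofPred_eq, Set.mem_iUnion, exists_prop]
  constructor
  · intro hv
    obtain ⟨i, j, k, hij, hik, hjk, hmem⟩ := exists_proj4_add_sum_smul_ee4_mem_flat4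
      (fun n => ⌊v n⌋) (fun n => Int.fract_nonneg (v n)) (fun n => (Int.fract_lt_one (v n)).le)
    rw [← eq_toE4_floor_add_sum_fract_smul_ee4, proj4_of_sum_eq_zero hv] at hmem
    exact ⟨_, i, j, k, hij, hik, hjk, hmem⟩
  · rintro ⟨a, i, j, k, -, -, -, u, -, rfl⟩
    exact sum_proj4_apply u
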